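/- arXiv:2102.10768 — 3 statements merged into one kernel-verified Lean document; each statement's English description precedes it below -/
import Mathlib

section
/- With the notation of the workload estimation recursion, for every vertex u of the rooted spanning tree t and every v ∈ C(u), c_u(v) equals the number of maps M from the vertex set of the subtree of t rooted at u into the CST candidates such that M(u) = v, M(u') ∈ C(u') for every u' in the subtree, and every tree edge of the subtree maps to a CST edge. (Proof by structural induction on the subtree.) -/
/-!
The subtree of `u` is `u` together with the disjoint union of the subtrees of its children,
and the only edge constraints between these pieces are the edges `u_c → u`. Hence a
homomorphism sending `u` to `v` is the same as an independent choice, for every child `u_c`,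
of an image `v' ∈ N^u_{u_c}(v)` and of a homomorphism of the subtree of `u_c` sending `u_c`
to `v'`. Counting these gives the same recursion as `c`, and induction from the leaves
(depth increases along child edges) concludes.
-/

section Descendant

variable {V : Type*} (parent : V → V)

def IsDescendant (u x : V) : Prop := ∃ n, parent^[n] x = u

abbrev Child (r u : V) : Type _ := {w : V // w ≠ r ∧ parent w = u}

def ParentAcyclic (r : V) : Prop := ∀ x, x ≠ r → ¬ IsDescendant parent x (parent x)

variable {parent}

theorem isDescendant_refl (u : V) : IsDescendant parent u u := ⟨0, rfl⟩

theorem IsDescendant.of_child {u w x : V} (hw : parent w = u) (h : IsDescendant parent w x) :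
    IsDescendant parent u x := by
  obtain ⟨n, hn⟩ := h
  exact ⟨n + 1, by rw [Function.iterate_succ_apply', hn, hw]⟩

theorem IsDescendant.parent_of_ne {w x : V} (h : IsDescendant parent w x) (hx : x ≠ w) :
    IsDescendant parent w (parent x) := by
  obtain ⟨_ | n, hn⟩ := h
  · exact absurd hn hx
  · exact ⟨n, hn⟩

theorem IsDescendant.total {a b x : V} (ha : IsDescendant parent a x)
    (hb : IsDescendant parent b x) : IsDescendant parent a b ∨ IsDescendant parent b a := by
  obtain ⟨m, rfl⟩ := ha
  obtain ⟨k, rfl⟩ := hb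
  rcases le_total m k with h | h
  · refine Or.inr ⟨k - m, ?_⟩
    rw [← Function.iterate_add_apply, Nat.sub_add_cancel h]
  · refine Or.inl ⟨m - k, ?_⟩
    rw [← Function.iterate_add_apply, Nat.sub_add_cancel h]

theorem depth_iterate_le {r : V} (depth : V → ℕ) (hr : parent r = r)
    (hdepth : ∀ x, x ≠ r → depth (parent x) < depth x) (n : ℕ) (x : V) :
    depth (parent^[n] x) ≤ depth x := by
  induction n with
  | zero => rfl
  | succ n ih =>
    rw [Function.iterate_succ_apply']
    refine le_trans ?_ ih
    by_cases h : parent^[n] x = r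
    · rw [h, hr]
    · exact (hdepth _ h).le

theorem parentAcyclic_of_depth {r : V} (depth : V → ℕ) (hr : parent r = r)
    (hdepth : ∀ x, x ≠ r → depth (parent x) < depth x) : ParentAcyclic parent r := by
  rintro x hx ⟨n, hn⟩
  have := depth_iterate_le depth hr hdepth n (parent x)
  rw [hn] at this
  exact (hdepth x hx).not_ge this

theorem wellFounded_child [Finite V] {r : V} (depth : V → ℕ)
    (hdepth : ∀ x, x ≠ r → depth (parent x) < depth x) :
    WellFounded (fun w u : V => w ≠ r ∧ parent w = u) :=
  Subrelation.wf (fun ⟨hw, hwu⟩ => hwu ▸ hdepth _ hw)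
    (Finite.wellFounded_of_trans_of_irrefl (fun a b : V => depth b < depth a))

theorem Child.not_isDescendant {r u : V} (hacyc : ParentAcyclic parent r)
    (w : Child parent r u) : ¬ IsDescendant parent w u := by
  simpa only [w.2.2] using hacyc w w.2.1

theorem Child.ne_of_isDescendant {r u : V} (hacyc : ParentAcyclic parent r)
    (w : Child parent r u) {x : V} (hx : IsDescendant parent w x) : x ≠ u := by
  rintro rfl
  exact w.not_isDescendant hacyc hx

theorem Child.eq_of_isDescendant {r u : V} (hacyc : ParentAcyclic parent r)
    {a b : Child parent r u} {x : V} (ha : IsDescendant parent a x) (hb : IsDescendant parent b x) :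
    a = b := by
  have key : ∀ a b : Child parent r u, IsDescendant parent a b → a = b := by
    intro a b hab
    by_contra hne
    have hba : (b : V) ≠ a := fun h => hne (Subtype.ext h.symm)
    exact a.not_isDescendant hacyc (by simpa only [b.2.2] using hab.parent_of_ne hba)
  rcases ha.total hb with h | h
  · exact key a b h
  · exact (key b a h).symm

theorem IsDescendant.exists_child {r u x : V} (hr : parent r = r) (h : IsDescendant parent u x)
    (hx : x ≠ u) : ∃ w : Child parent r u, IsDescendant parent w x := by
  obtain ⟨n, hn⟩ := h
  induction n generalizing x with
  | zero => exact absurd hn hx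
  | succ n ih =>
    rw [Function.iterate_succ_apply] at hn
    by_cases hxu : parent x = u
    · have hxr : x ≠ r := by rintro rfl; exact hx (hr ▸ hxu)
      exact ⟨⟨x, hxr, hxu⟩, isDescendant_refl x⟩
    · obtain ⟨w, m, hm⟩ := ih hxu hn
      exact ⟨w, m + 1, by rwa [Function.iterate_succ_apply]⟩

end Descendant

section

variable {V W : Type*} (parent : V → V) (C : V → Finset W) (N : V → V → W → Finset W)

def SubtreeHom (u : V) (v : W) : Type _ :=
  {M : {x : V // IsDescendant parent u x} → W //
    (∀ hu : IsDescendant parent u u, M ⟨u, hu⟩ = v) ∧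
    (∀ x, M x ∈ C x.1) ∧
    (∀ (x p : {y : V // IsDescendant parent u y}), x.1 ≠ u → p.1 = parent x.1 →
      M x ∈ N p.1 x.1 (M p))}

variable {parent C N}

namespace SubtreeHom

instance [Finite V] (u : V) (v : W) : Finite (SubtreeHom parent C N u v) :=
  Finite.of_injective (fun M x => (⟨M.1 x, M.2.2.1 x⟩ : C x.1)) fun _ _ h =>
    Subtype.ext <| funext fun x => congrArg Subtype.val (congrFun h x)

variable {r u w : V} {v : W}

theorem apply_root (M : SubtreeHom parent C N u v) : M.1 ⟨u, isDescendant_refl u⟩ = v :=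
  M.2.1 _

theorem sigma_ext {S : Finset W} {s t : Σ v' : S, SubtreeHom parent C N w v'}
    (h : s.2.1 = t.2.1) : s = t := by
  obtain ⟨⟨a, ha⟩, F, hF⟩ := s
  obtain ⟨⟨b, hb⟩, G, hG⟩ := t
  obtain rfl : F = G := h
  obtain rfl : a = b := (hF.1 (isDescendant_refl w)).symm.trans (hG.1 (isDescendant_refl w))
  rfl

def restrictChildren (hacyc : ParentAcyclic parent r) (M : SubtreeHom parent C N u v)
    (w : Child parent r u) : Σ v' : N u w v, SubtreeHom parent C N w v' :=
  have hw : IsDescendant parent u w := (isDescendant_refl _).of_child w.2.2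
  ⟨⟨M.1 ⟨w, hw⟩, by
      simpa only [M.apply_root] using
        M.2.2.2 ⟨w, hw⟩ ⟨u, isDescendant_refl u⟩
          (w.ne_of_isDescendant hacyc (isDescendant_refl _)) w.2.2.symm⟩,
    fun y => M.1 ⟨y, y.2.of_child w.2.2⟩, fun _ => rfl, fun y => M.2.2.1 _,
    fun x p _ hp => M.2.2.2 ⟨x, _⟩ ⟨p, _⟩ (w.ne_of_isDescendant hacyc x.2) hp⟩

theorem restrictChildren_injective (hr : parent r = r) (hacyc : ParentAcyclic parent r) :
    Function.Injective (restrictChildren hacyc : SubtreeHom parent C N u v → _) := by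
  intro M₁ M₂ h
  refine Subtype.ext (funext fun x => ?_)
  by_cases hx : x.1 = u
  · obtain rfl : x = ⟨u, isDescendant_refl u⟩ := Subtype.ext hx
    exact M₁.apply_root.trans M₂.apply_root.symm
  · obtain ⟨w, hw⟩ := x.2.exists_child hr hx
    exact congrArg (fun s => s.2.1 ⟨x, hw⟩) (congrFun h w)

variable (f : ∀ w : Child parent r u, Σ v' : N u w v, SubtreeHom parent C N w v')

open Classical in
noncomputable def glue (x : {x : V // IsDescendant parent u x}) : W :=
  if h : ∃ w : Child parent r u, IsDescendant parent w x then
    (f h.choose).2.1 ⟨x, h.choose_spec⟩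
  else v

theorem glue_of_isDescendant (hacyc : ParentAcyclic parent r)
    {x : {x : V // IsDescendant parent u x}} (w : Child parent r u)
    (hx : IsDescendant parent w x) : glue f x = (f w).2.1 ⟨x, hx⟩ := by
  have key : ∀ (w' : Child parent r u) (hw' : IsDescendant parent w' x),
      (f w').2.1 ⟨x, hw'⟩ = (f w).2.1 ⟨x, hx⟩ := by
    rintro w' hw'
    obtain rfl := Child.eq_of_isDescendant hacyc hw' hx
    rfl
  rw [glue, dif_pos ⟨w, hx⟩]
  exact key _ _

theorem glue_root (hacyc : ParentAcyclic parent r) : glue f ⟨u, isDescendant_refl u⟩ = v := by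
  rw [glue, dif_neg]
  rintro ⟨w, hw⟩
  exact w.not_isDescendant hacyc hw

theorem glue_mem (hr : parent r = r) (hacyc : ParentAcyclic parent r) (hv : v ∈ C u)
    (x : {x : V // IsDescendant parent u x}) : glue f x ∈ C x.1 := by
  by_cases hx : x.1 = u
  · obtain rfl : x = ⟨u, isDescendant_refl u⟩ := Subtype.ext hx
    rwa [glue_root f hacyc]
  · obtain ⟨w, hw⟩ := x.2.exists_child hr hx
    rw [glue_of_isDescendant f hacyc w hw]
    exact (f w).2.2.2.1 _

theorem glue_mem_N (hr : parent r = r) (hacyc : ParentAcyclic parent r)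
    (x p : {x : V // IsDescendant parent u x}) (hx : x.1 ≠ u) (hp : p.1 = parent x.1) :
    glue f x ∈ N p.1 x.1 (glue f p) := by
  obtain ⟨w, hw⟩ := x.2.exists_child hr hx
  rw [glue_of_isDescendant f hacyc w hw]
  by_cases hpu : p.1 = u
  · have hxw : x.1 = w := by
      by_contra hxw
      have hwu := hw.parent_of_ne hxw
      rw [← hp, hpu] at hwu
      exact w.not_isDescendant hacyc hwu
    obtain rfl : p = ⟨u, isDescendant_refl u⟩ := Subtype.ext hpu
    have hxw' : (⟨x.1, hw⟩ : {y // IsDescendant parent w y}) = ⟨w, isDescendant_refl _⟩ :=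
      Subtype.ext hxw
    rw [hxw', (f w).2.apply_root, glue_root f hacyc, hxw]
    exact (f w).1.2
  · have hxw : x.1 ≠ w := fun hxw => hpu (by rw [hp, hxw, w.2.2])
    have hwp : IsDescendant parent w p := by
      rw [hp]
      exact hw.parent_of_ne hxw
    rw [glue_of_isDescendant f hacyc w hwp]
    exact (f w).2.2.2.2 ⟨x, hw⟩ ⟨p, hwp⟩ hxw hp

noncomputable def glueHom (hr : parent r = r) (hacyc : ParentAcyclic parent r) (hv : v ∈ C u) :
    SubtreeHom parent C N u v :=
  ⟨glue f, fun _ => glue_root f hacyc, glue_mem f hr hacyc hv, glue_mem_N f hr hacyc⟩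

theorem restrictChildren_glueHom (hr : parent r = r) (hacyc : ParentAcyclic parent r)
    (hv : v ∈ C u) : restrictChildren hacyc (glueHom f hr hacyc hv) = f :=
  funext fun w => sigma_ext <| funext fun y => glue_of_isDescendant f hacyc w y.2

theorem card_eq_prod_sum [Fintype V] [DecidableEq V] (hr : parent r = r)
    (hacyc : ParentAcyclic parent r) (hv : v ∈ C u) :
    Nat.card (SubtreeHom parent C N u v) =
      ∏ w ∈ Finset.univ.filter (fun x => x ≠ r ∧ parent x = u),
        ∑ v' ∈ N u w v, Nat.card (SubtreeHom parent C N w v') := by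
  have hbij : Function.Bijective (restrictChildren hacyc : SubtreeHom parent C N u v → _) :=
    ⟨restrictChildren_injective hr hacyc,
      fun f => ⟨glueHom f hr hacyc hv, restrictChildren_glueHom f hr hacyc hv⟩⟩
  rw [Nat.card_eq_of_bijective _ hbij, Nat.card_pi,
    Finset.prod_subtype (p := fun x => x ≠ r ∧ parent x = u) (F := inferInstance) _ (by simp)]
  refine Finset.prod_congr rfl fun w _ => ?_
  rw [Nat.card_sigma,
    Finset.sum_coe_sort (N u w v) (fun v' => Nat.card (SubtreeHom parent C N w v'))]

end SubtreeHom

end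

theorem dp_counts_subtree_homomorphisms_general
    {Vq Vg : Type*} [Fintype Vq] [DecidableEq Vq]
    (parent : Vq → Vq) (r : Vq)
    (depth : Vq → ℕ)
    (hr : parent r = r)
    (hdepth : ∀ x, x ≠ r → depth (parent x) < depth x)   -- rooted-tree structure
    (C : Vq → Finset Vg)
    (N : Vq → Vq → Vg → Finset Vg)                       -- adjacency lists N^u_{u_c}(v)
    (hN : ∀ u uc v, N u uc v ⊆ C uc)
    (c : Vq → Vg → ℕ)
    (hc : ∀ u v, c u v =
      ∏ uc ∈ Finset.univ.filter (fun x => x ≠ r ∧ parent x = u), ∑ v' ∈ N u uc v, c uc v')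
    -- `Desc u x`: x is a descendant of u (i.e. in the subtree of t rooted at u)
    (Desc : Vq → Vq → Prop)
    (hDesc : ∀ u x, Desc u x ↔ ∃ n, parent^[n] x = u) :
    ∀ (u : Vq) (v : Vg), v ∈ C u →
      c u v = Nat.card {M : {x : Vq // Desc u x} → Vg //
        (∀ hu : Desc u u, M ⟨u, hu⟩ = v) ∧
        (∀ x, M x ∈ C x.1) ∧
        (∀ (x p : {y : Vq // Desc u y}), x.1 ≠ u → p.1 = parent x.1 →
          M x ∈ N p.1 x.1 (M p))} := by
  obtain rfl : Desc = IsDescendant parent := funext₂ fun u x => propext (hDesc u x)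
  have hacyc := parentAcyclic_of_depth depth hr hdepth
  intro u
  induction u using (wellFounded_child depth hdepth).induction with
  | h u ih =>
    intro v hv
    calc c u v
        = ∏ w ∈ Finset.univ.filter (fun x => x ≠ r ∧ parent x = u),
            ∑ v' ∈ N u w v, c w v' := hc u v
      _ = ∏ w ∈ Finset.univ.filter (fun x => x ≠ r ∧ parent x = u),
            ∑ v' ∈ N u w v, Nat.card (SubtreeHom parent C N w v') :=
          Finset.prod_congr rfl fun w hw => Finset.sum_congr rfl fun v' hv' =>
            ih w (Finset.mem_filter.1 hw).2 v' (hN u w v hv')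
      _ = _ := (SubtreeHom.card_eq_prod_sum hr hacyc hv).symm

/-- For every vertex `u` of the rooted tree and every candidate `v ∈ C(u)`,
the DP value `c u v` equals the number of maps from the subtree rooted at `u` into the
CST candidates mapping `u` to `v`, respecting candidate sets and mapping every tree edge
of the subtree to a CST edge.  (`Desc u x` means `x` lies in the subtree rooted at `u`.) -/
theorem dp_counts_subtree_homomorphisms
    {Vq Vg : Type*} [Fintype Vq] [DecidableEq Vq] [Fintype Vg] [DecidableEq Vg]
    (parent : Vq → Vq) (r : Vq)
    (depth : Vq → ℕ)
    (hr : parent r = r)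
    (hdepth : ∀ x, x ≠ r → depth (parent x) < depth x)   -- rooted-tree structure
    (hroot : ∀ x, ∃ n, parent^[n] x = r)
    (C : Vq → Finset Vg)
    (N : Vq → Vq → Vg → Finset Vg)                       -- adjacency lists N^u_{u_c}(v)
    (hN : ∀ u uc v, N u uc v ⊆ C uc)
    (c : Vq → Vg → ℕ)
    (hc : ∀ u v, c u v =
      ∏ uc ∈ Finset.univ.filter (fun x => x ≠ r ∧ parent x = u), ∑ v' ∈ N u uc v, c uc v')
    -- `Desc u x`: x is a descendant of u (i.e. in the subtree of t rooted at u)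
    (Desc : Vq → Vq → Prop)
    (hDesc : ∀ u x, Desc u x ↔ ∃ n, parent^[n] x = u) :
    ∀ (u : Vq) (v : Vg), v ∈ C u →
      c u v = Nat.card {M : {x : Vq // Desc u x} → Vg //
        (∀ hu : Desc u u, M ⟨u, hu⟩ = v) ∧
        (∀ x, M x ∈ C x.1) ∧
        (∀ (x p : {y : Vq // Desc u y}), x.1 ≠ u → p.1 = parent x.1 →
          M x ∈ N p.1 x.1 (M p))} :=
  dp_counts_subtree_homomorphisms_general parent r depth hr hdepth C N hN c hc Desc hDesc
end

section
/- In the bottom-up refinement of CST construction, removing a candidate v ∈ C(u) that is invalid (i.e., N^u_{u_c}(v) = ∅ for some child u_c of u in the BFS tree, or no parent candidate v_p ∈ C(u_p) has v ∈ N^{u_p}_u(v_p)) preserves soundness: every subgraph-isomorphism embedding M of q in G still satisfies M(u') ∈ C(u') for all query vertices u' after removal. -/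
/-! An embedding maps every tree edge `(parent x, x)` to an edge of `G` and, by soundness, every
query vertex into its candidate set. So if `M u = v`, then `M uc` is a candidate of the child `uc`
adjacent to `v`, and `M (parent u)` a candidate of the parent adjacent to `v`; an invalid `v`
admits neither, hence `M u ≠ v` and `M u` survives the removal. -/

def IsInvalidCandidate {Vq Vg : Type*} (adjG : Vg → Vg → Prop) (parent : Vq → Vq) (r : Vq)
    (C : Vq → Set Vg) (u : Vq) (v : Vg) : Prop :=
  (∃ uc, uc ≠ r ∧ parent uc = u ∧ ∀ v' ∈ C uc, ¬ adjG v v') ∨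
    (u ≠ r ∧ ∀ vp ∈ C (parent u), ¬ adjG vp v)

theorem IsInvalidCandidate.apply_ne {Vq Vg : Type*} {adjG : Vg → Vg → Prop} {parent : Vq → Vq}
    {r : Vq} {C : Vq → Set Vg} {u : Vq} {v : Vg} (hinvalid : IsInvalidCandidate adjG parent r C u v)
    {M : Vq → Vg} (hC : ∀ x, M x ∈ C x) (htree : ∀ x, x ≠ r → adjG (M (parent x)) (M x)) :
    M u ≠ v := by
  rintro rfl
  rcases hinvalid with ⟨uc, huc, rfl, hchild⟩ | ⟨hu, hparent⟩
  · exact hchild (M uc) (hC uc) (htree uc huc)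
  · exact hparent (M (parent u)) (hC _) (htree u hu)

theorem Set.mem_update_sdiff_singleton {α β : Type*} [DecidableEq α] {C : α → Set β} {f : α → β}
    (hf : ∀ a, f a ∈ C a) {a : α} {b : β} (hb : f a ≠ b) (a' : α) :
    f a' ∈ Function.update C a (C a \ {b}) a' := by
  rcases eq_or_ne a' a with rfl | h
  · simpa [hb] using hf a'
  · simpa [h] using hf a'

theorem refinement_preserves_soundness_general
    {Vq Vg L : Type*} [DecidableEq Vq]
    (adjq : Vq → Vq → Prop) (adjG : Vg → Vg → Prop)
    (lq : Vq → L) (lG : Vg → L)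
    (parent : Vq → Vq) (r : Vq)                 -- the rooted BFS tree t_q of q
    (htree : ∀ x, x ≠ r → adjq (parent x) x)    -- tree edges are query edges
    (C : Vq → Set Vg)
    -- soundness of the CST before removal
    (hsound : ∀ M : Vq → Vg, Function.Injective M → (∀ x, lq x = lG (M x)) →
      (∀ a b, adjq a b → adjG (M a) (M b)) → ∀ u', M u' ∈ C u')
    (u : Vq) (v : Vg)
    -- v is an invalid candidate of u
    (hinvalid :
      (∃ uc, uc ≠ r ∧ parent uc = u ∧ ∀ v' ∈ C uc, ¬ adjG v v') ∨
      (u ≠ r ∧ ∀ vp ∈ C (parent u), ¬ adjG vp v)) :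
    ∀ M : Vq → Vg, Function.Injective M → (∀ x, lq x = lG (M x)) →
      (∀ a b, adjq a b → adjG (M a) (M b)) →
      ∀ u', M u' ∈ Function.update C u (C u \ {v}) u' := by
  intro M hinj hlab hadj
  have hC := hsound M hinj hlab hadj
  have hMu : M u ≠ v :=
    IsInvalidCandidate.apply_ne hinvalid hC fun x hx => hadj _ _ (htree x hx)
  exact Set.mem_update_sdiff_singleton hC hMu

/-- In the bottom-up refinement, removing an invalid candidate `v ∈ C(u)`
(one with an empty adjacency list towards some child, or not adjacent to any parent
candidate) preserves soundness of the CST: every subgraph-isomorphism embedding `M` of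
`q` in `G` still maps each query vertex `u'` into the (updated) candidate set. -/
theorem refinement_preserves_soundness
    {Vq Vg L : Type*} [DecidableEq Vq] [DecidableEq Vg]
    (adjq : Vq → Vq → Prop) (adjG : Vg → Vg → Prop)
    (lq : Vq → L) (lG : Vg → L)
    (parent : Vq → Vq) (r : Vq)                 -- the rooted BFS tree t_q of q
    (hGsym : ∀ a b, adjG a b → adjG b a)
    (htree : ∀ x, x ≠ r → adjq (parent x) x)    -- tree edges are query edges
    (C : Vq → Set Vg)
    -- soundness of the CST before removal
    (hsound : ∀ M : Vq → Vg, Function.Injective M → (∀ x, lq x = lG (M x)) →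
      (∀ a b, adjq a b → adjG (M a) (M b)) → ∀ u', M u' ∈ C u')
    (u : Vq) (v : Vg)
    -- v is an invalid candidate of u
    (hinvalid :
      (∃ uc, uc ≠ r ∧ parent uc = u ∧ ∀ v' ∈ C uc, ¬ adjG v v') ∨
      (u ≠ r ∧ ∀ vp ∈ C (parent u), ¬ adjG vp v)) :
    ∀ M : Vq → Vg, Function.Injective M → (∀ x, lq x = lG (M x)) →
      (∀ a b, adjq a b → adjG (M a) (M b)) →
      ∀ u', M u' ∈ Function.update C u (C u \ {v}) u' :=
  refinement_preserves_soundness_general adjq adjG lq lG parent r htree C hsound u v hinvalid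
end

section
/- If every root-to-leaf path constraint is enforced by top-down construction and bottom-up refinement (i.e., every surviving candidate v ∈ C(u) has a nonempty adjacency list N^u_{u_c}(v) into C(u_c) for each child u_c, and is in the adjacency list of some parent candidate), then for every surviving candidate v ∈ C(u) there exists a homomorphism of the whole spanning tree t_q into the CST mapping u to v. -/
/-!
Walk up from `u` to the root, choosing at each step a parent candidate adjacent to the current
one (upward condition); since `depth` strictly decreases, the ancestors of `u` are pairwise
distinct, so this assigns them values consistently. Then fill in all remaining vertices top-down
by recursion on `depth`, choosing each one from the adjacency list of its parent's image, which
is nonempty by the downward condition.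
-/

section TreeHomomorphism

variable {Vq Vg : Type*} (parent : Vq → Vq) (r : Vq) (depth : Vq → ℕ)
  (C : Vq → Set Vg) (N : Vq → Vq → Vg → Set Vg)

def ancestors (u : Vq) : Set Vq := Set.range fun n => parent^[n] u

theorem self_mem_ancestors (u : Vq) : u ∈ ancestors parent u := ⟨0, rfl⟩

theorem parent_mem_ancestors {u x : Vq} (hx : x ∈ ancestors parent u) :
    parent x ∈ ancestors parent u := by
  obtain ⟨n, rfl⟩ := hx
  exact ⟨n + 1, Function.iterate_succ_apply' parent n u⟩

theorem mem_ancestors_iff {u x : Vq} :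
    x ∈ ancestors parent u ↔ x = u ∨ x ∈ ancestors parent (parent u) := by
  constructor
  · rintro ⟨_ | n, rfl⟩
    · exact .inl rfl
    · exact .inr ⟨n, (Function.iterate_succ_apply parent n u).symm⟩
  · rintro (rfl | ⟨n, rfl⟩)
    · exact self_mem_ancestors parent x
    · exact ⟨n + 1, Function.iterate_succ_apply parent n u⟩

theorem ancestors_of_fixed (hr : parent r = r) : ancestors parent r = {r} := by
  ext x
  constructor
  · rintro ⟨n, rfl⟩
    exact Function.iterate_fixed hr n
  · rintro rfl
    exact self_mem_ancestors parent x

variable {parent r depth} in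
theorem depth_le_of_mem_ancestors (hr : parent r = r)
    (hdepth : ∀ x, x ≠ r → depth (parent x) < depth x) {u x : Vq}
    (hx : x ∈ ancestors parent u) : depth x ≤ depth u := by
  obtain ⟨n, rfl⟩ := hx
  induction n with
  | zero => rfl
  | succ n ih =>
    dsimp only at ih ⊢
    rw [Function.iterate_succ_apply']
    by_cases hn : parent^[n] u = r
    · rw [hn, hr, ← hn]
      exact ih
    · exact (hdepth _ hn).le.trans ih

def IsHomOn (S : Set Vq) (M : Vq → Vg) : Prop :=
  ∀ x ∈ S, M x ∈ C x ∧ (x ≠ r → M x ∈ N (parent x) x (M (parent x)))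

variable {parent r depth C N}

theorem exists_isHomOn_ancestors (hr : parent r = r)
    (hdepth : ∀ x, x ≠ r → depth (parent x) < depth x)
    (hup : ∀ x, x ≠ r → ∀ v ∈ C x, ∃ vp ∈ C (parent x), v ∈ N (parent x) x vp)
    (u : Vq) (v : Vg) (hv : v ∈ C u) :
    ∃ f : Vq → Vg, f u = v ∧ IsHomOn parent r C N (ancestors parent u) f := by
  classical
  induction u using (measure depth).wf.induction generalizing v with
  | h u ih =>
  by_cases hur : u = r
  · subst hur
    refine ⟨fun _ => v, rfl, ?_⟩
    rw [ancestors_of_fixed parent u hr]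
    rintro x rfl
    exact ⟨hv, fun h => absurd rfl h⟩
  obtain ⟨vp, hvp, hv_adj⟩ := hup u hur v hv
  obtain ⟨f, hfp, hf⟩ := ih (parent u) (hdepth u hur) vp hvp
  have hu_new : u ∉ ancestors parent (parent u) := fun hu =>
    (depth_le_of_mem_ancestors hr hdepth hu).not_gt (hdepth u hur)
  refine ⟨Function.update f u v, Function.update_self u v f, fun x hx => ?_⟩
  rcases (mem_ancestors_iff parent).mp hx with rfl | hx
  · have hpx : parent x ≠ x := fun h => hu_new ⟨0, h⟩
    simpa [Function.update_of_ne hpx, hfp] using ⟨hv, fun _ => hv_adj⟩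
  · have hxu : x ≠ u := fun h => hu_new (h ▸ hx)
    have hpxu : parent x ≠ u := fun h =>
      hu_new (by simpa [h] using parent_mem_ancestors parent hx)
    simpa [Function.update_of_ne hxu, Function.update_of_ne hpxu] using hf x hx

open Classical in
variable (N) in
/-- The fallback `f x` in the last branch is never taken under the downward condition; it only
avoids an `Inhabited Vg` assumption. -/
noncomputable def extendDown (hdepth : ∀ x, x ≠ r → depth (parent x) < depth x)
    (S : Set Vq) (f : Vq → Vg) (x : Vq) : Vg :=
  if h : x ∈ S ∨ x = r then f x
  else
    have : depth (parent x) < depth x := hdepth x (not_or.mp h).2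
    if hne : (N (parent x) x (extendDown hdepth S f (parent x))).Nonempty then hne.some
    else f x
termination_by depth x

variable (hdepth : ∀ x, x ≠ r → depth (parent x) < depth x) {S : Set Vq} (f : Vq → Vg)

theorem extendDown_of_mem {x : Vq} (hx : x ∈ S) : extendDown N hdepth S f x = f x := by
  rw [extendDown, dif_pos (.inl hx)]

theorem extendDown_mem_N_of_nonempty {x : Vq} (hxS : x ∉ S) (hxr : x ≠ r)
    (hne : (N (parent x) x (extendDown N hdepth S f (parent x))).Nonempty) :
    extendDown N hdepth S f x ∈ N (parent x) x (extendDown N hdepth S f (parent x)) := by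
  rw [extendDown.eq_1 (x := x), dif_neg (not_or.mpr ⟨hxS, hxr⟩), dif_pos hne]
  exact hne.some_mem

variable {hdepth f} in
theorem isHomOn_univ_extendDown (hrS : r ∈ S) (hS : ∀ x ∈ S, parent x ∈ S)
    (hf : IsHomOn parent r C N S f) (hN : ∀ p c v, N p c v ⊆ C c)
    (hdown : ∀ x, ∀ v ∈ C x, ∀ c, c ≠ r → parent c = x → (N x c v).Nonempty) :
    IsHomOn parent r C N Set.univ (extendDown N hdepth S f) := by
  have hmem : ∀ x, extendDown N hdepth S f x ∈ C x := by
    intro x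
    induction x using (measure depth).wf.induction with
    | h x ih =>
    by_cases hxS : x ∈ S
    · rw [extendDown_of_mem hdepth f hxS]
      exact (hf x hxS).1
    have hxr : x ≠ r := fun h => hxS (h ▸ hrS)
    have hne := hdown _ _ (ih (parent x) (hdepth x hxr)) x hxr rfl
    exact hN _ _ _ (extendDown_mem_N_of_nonempty hdepth f hxS hxr hne)
  intro x _
  refine ⟨hmem x, fun hxr => ?_⟩
  by_cases hxS : x ∈ S
  · rw [extendDown_of_mem hdepth f hxS, extendDown_of_mem hdepth f (hS x hxS)]
    exact (hf x hxS).2 hxr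
  · exact extendDown_mem_N_of_nonempty hdepth f hxS hxr
      (hdown _ _ (hmem (parent x)) x hxr rfl)

end TreeHomomorphism

theorem surviving_candidate_extends_to_tree_homomorphism_general
    {Vq Vg : Type*}
    (parent : Vq → Vq) (r : Vq)
    (depth : Vq → ℕ)
    (hr : parent r = r)
    (hdepth : ∀ x, x ≠ r → depth (parent x) < depth x)  -- rooted-tree structure
    (hroot : ∀ x, ∃ n, parent^[n] x = r)                 -- spanning tree: connected to root
    (C : Vq → Set Vg)
    (N : Vq → Vq → Vg → Set Vg)                          -- adjacency lists N^u_{u_c}(v)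
    (hN : ∀ p c v, N p c v ⊆ C c)
    -- downward condition of the refinement: nonempty adjacency list towards each child
    (hdown : ∀ x, ∀ v ∈ C x, ∀ c, c ≠ r → parent c = x → (N x c v).Nonempty)
    -- upward condition: each surviving candidate is adjacent to some parent candidate
    (hup : ∀ x, x ≠ r → ∀ v ∈ C x, ∃ vp ∈ C (parent x), v ∈ N (parent x) x vp) :
    ∀ u, ∀ v ∈ C u, ∃ M : Vq → Vg,
      M u = v ∧ (∀ x, M x ∈ C x) ∧
      ∀ x, x ≠ r → M x ∈ N (parent x) x (M (parent x)) := by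
  intro u v hv
  obtain ⟨f, hfu, hf⟩ := exists_isHomOn_ancestors hr hdepth hup u v hv
  have hM := isHomOn_univ_extendDown (hdepth := hdepth) (hroot u)
    (fun _ => parent_mem_ancestors parent) hf hN hdown
  refine ⟨extendDown N hdepth (ancestors parent u) f, ?_, fun x => (hM x trivial).1,
    fun x hx => (hM x trivial).2 hx⟩
  rw [extendDown_of_mem hdepth f (self_mem_ancestors parent u), hfu]

/-- after top-down construction and bottom-up refinement, every surviving
candidate `v ∈ C(u)` has a nonempty adjacency list towards each child and lies in the
adjacency list of some parent candidate; consequently every surviving candidate extends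
to a homomorphism of the whole rooted spanning tree `t_q` into the CST mapping `u` to
`v`. -/
theorem surviving_candidate_extends_to_tree_homomorphism
    {Vq Vg : Type*} [Fintype Vq] [DecidableEq Vq]
    (parent : Vq → Vq) (r : Vq)
    (depth : Vq → ℕ)
    (hr : parent r = r)
    (hdepth : ∀ x, x ≠ r → depth (parent x) < depth x)  -- rooted-tree structure
    (hroot : ∀ x, ∃ n, parent^[n] x = r)                 -- spanning tree: connected to root
    (C : Vq → Set Vg)
    (N : Vq → Vq → Vg → Set Vg)                          -- adjacency lists N^u_{u_c}(v)
    (hN : ∀ p c v, N p c v ⊆ C c)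
    -- downward condition of the refinement: nonempty adjacency list towards each child
    (hdown : ∀ x, ∀ v ∈ C x, ∀ c, c ≠ r → parent c = x → (N x c v).Nonempty)
    -- upward condition: each surviving candidate is adjacent to some parent candidate
    (hup : ∀ x, x ≠ r → ∀ v ∈ C x, ∃ vp ∈ C (parent x), v ∈ N (parent x) x vp) :
    ∀ u, ∀ v ∈ C u, ∃ M : Vq → Vg,
      M u = v ∧ (∀ x, M x ∈ C x) ∧
      ∀ x, x ≠ r → M x ∈ N (parent x) x (M (parent x)) :=
  surviving_candidate_extends_to_tree_homomorphism_general parent r depth hr hdepth hroot C N hN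
    hdown hup
end
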